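/- Let n ≥ 1 and s, s' > 0 with s ≠ s'. Then: (a) for every g ∈ L²(ℝ^d, Lebesgue), the function Y ↦ √(φ(s,s',Y))·g(Y) is in L²(ℝ^d) with ∫ φ(s,s',Y)|g(Y)|² dY ≤ ((s+s')/(2√(s·s')))^n ∫ |g(Y)|² dY; and (b) there exists g ∈ L²(ℝ^d) with ∫ |g|² dY > 0 and ∫ φ(s,s',Y)|g(Y)|² dY ≠ ∫ |g(Y)|² dY. (This is the content of Theorem 2.4: in the unitary trivializations f ↦ (f/√|Ω_t|)√Ω_t, the prequantum BKS pairing map B^{prQ}_{ss'} is multiplication by √φ, hence bounded but not an isometry, so it differs from the parallel transport of δ^{prQ}, which is the identity in these trivializations.) -/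

import Mathlib

open scoped Real BigOperators
open MeasureTheory

/-- `sinhc x = sinh x / x` for `x ≠ 0`, and `sinhc 0 = 1`. -/
noncomputable def sinhc (x : ℝ) : ℝ := if x = 0 then 1 else Real.sinh x / x

/-- The function `η(Y) = ∏_{i ∈ I} sinhc (α_i Y)` (equation (5) of the paper). -/
noncomputable def eta {d : ℕ} {I : Type*} [Fintype I]
    (α : I → (EuclideanSpace ℝ (Fin d) →ₗ[ℝ] ℝ)) (Y : EuclideanSpace ℝ (Fin d)) : ℝ :=
  ∏ i, sinhc (α i Y)

/-- The function `φ(s,s',Y)` of equation (13) of the paper, with `n = dim K`. -/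
noncomputable def phi {d : ℕ} {I : Type*} [Fintype I]
    (α : I → (EuclideanSpace ℝ (Fin d) →ₗ[ℝ] ℝ)) (n : ℕ) (s s' : ℝ)
    (Y : EuclideanSpace ℝ (Fin d)) : ℝ :=
  ((s + s') / (2 * Real.sqrt (s * s'))) ^ n * (eta α (((s + s') / 2) • Y)) ^ 2 /
    (eta α (s • Y) * eta α (s' • Y))

/-!
Write `C = ((s + s') / (2 √(s s')))ⁿ`. Part (a) holds because `0 ≤ φ ≤ C`: factorwise,
`sinhc v ² ≤ sinhc (v + w) · sinhc (v - w)` for `|w| < |v|`, since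
`sinh (v + w) sinh (v - w) = sinh² v - sinh² w` and `sinhc` is increasing in `|x|` (`sinh` is
convex on `[0, ∞)`); take `v = (s + s') t / 2`, `w = (s - s') t / 2`. For part (b), `φ` is
continuous with `φ(0) = C > 1` by strict AM-GM, so for the indicator `g` of a small ball
around `0` on which `φ > 1` we get `∫ φ |g|² > ∫ |g|²`.
-/

open Real Set

lemma sinhc_zero : sinhc 0 = 1 := if_pos rfl

lemma sinhc_of_ne_zero {x : ℝ} (hx : x ≠ 0) : sinhc x = sinh x / x := if_neg hx

lemma sinhc_mul_self (x : ℝ) : sinhc x * x = sinh x := by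
  rcases eq_or_ne x 0 with rfl | hx
  · simp
  · rw [sinhc_of_ne_zero hx, div_mul_cancel₀ _ hx]

lemma sinhc_eq_dslope : sinhc = dslope sinh 0 := by
  ext
  simp [dslope, Function.update_apply, sinhc, slope, div_eq_inv_mul]

lemma continuous_sinhc : Continuous sinhc := by
  refine continuous_iff_continuousAt.mpr fun x => ?_
  rw [sinhc_eq_dslope]
  rcases eq_or_ne x 0 with rfl | hx
  · exact continuousAt_dslope_same.mpr differentiable_sinh.differentiableAt
  · exact (continuousAt_dslope_of_ne hx).mpr continuous_sinh.continuousAt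

lemma sinhc_neg (x : ℝ) : sinhc (-x) = sinhc x := by
  rcases eq_or_ne x 0 with rfl | hx
  · simp
  · rw [sinhc_of_ne_zero hx, sinhc_of_ne_zero (neg_ne_zero.mpr hx), sinh_neg, neg_div_neg_eq]

lemma sinhc_abs (x : ℝ) : sinhc |x| = sinhc x := by
  rcases abs_choice x with h | h <;> rw [h]
  exact sinhc_neg x

lemma convexOn_sinh_Ici : ConvexOn ℝ (Ici 0) sinh := by
  refine MonotoneOn.convexOn_of_deriv (convex_Ici 0) continuous_sinh.continuousOn
    differentiable_sinh.differentiableOn ?_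
  rw [Real.deriv_sinh, interior_Ici]
  intro x hx y hy hxy
  rw [cosh_le_cosh, abs_of_pos hx, abs_of_pos hy]
  exact hxy

lemma one_le_sinhc (x : ℝ) : 1 ≤ sinhc x := by
  rw [← sinhc_abs]
  rcases (abs_nonneg x).eq_or_lt with hx | hx
  · rw [← hx, sinhc_zero]
  · rw [sinhc_of_ne_zero hx.ne', one_le_div hx]
    exact self_le_sinh_iff.mpr hx.le

lemma sinhc_le_sinhc_of_abs_le {x y : ℝ} (h : |x| ≤ |y|) : sinhc x ≤ sinhc y := by
  rw [← sinhc_abs x, ← sinhc_abs y]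
  rcases (abs_nonneg x).eq_or_lt with hx | hx
  · rw [← hx, sinhc_zero]
    exact one_le_sinhc _
  · have := convexOn_sinh_Ici.secant_mono (mem_Ici.mpr le_rfl)
      (abs_nonneg x) (abs_nonneg y) hx.ne' (hx.trans_le h).ne' h
    simpa [sinhc_of_ne_zero hx.ne', sinhc_of_ne_zero (hx.trans_le h).ne'] using this

lemma sinhc_pos (x : ℝ) : 0 < sinhc x := one_pos.trans_le (one_le_sinhc x)

lemma sq_sinhc_le_sinhc_add_mul_sinhc_sub {v w : ℝ} (h : |w| < |v|) :
    sinhc v ^ 2 ≤ sinhc (v + w) * sinhc (v - w) := by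
  have hvw : 0 < (v + w) * (v - w) := by nlinarith [sq_abs v, sq_abs w, abs_nonneg w]
  have hprod : sinh (v + w) * sinh (v - w) = sinh v ^ 2 - sinh w ^ 2 := by
    rw [sinh_add, sinh_sub]
    linear_combination sinh v ^ 2 * cosh_sq w - sinh w ^ 2 * cosh_sq v
  have hmono : sinhc w ^ 2 ≤ sinhc v ^ 2 :=
    pow_le_pow_left₀ (sinhc_pos w).le (sinhc_le_sinhc_of_abs_le h.le) 2
  rw [← sinhc_mul_self, ← sinhc_mul_self (v - w), ← sinhc_mul_self v, ← sinhc_mul_self w] at hprod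
  refine le_of_mul_le_mul_right ?_ hvw
  nlinarith [sq_nonneg w]

lemma sq_sinhc_midpoint_le {s s' : ℝ} (hs : 0 < s) (hs' : 0 < s') (t : ℝ) :
    sinhc ((s + s') / 2 * t) ^ 2 ≤ sinhc (s * t) * sinhc (s' * t) := by
  rcases eq_or_ne t 0 with rfl | ht
  · simp [sinhc_zero]
  · have hlt : |(s - s') / 2 * t| < |(s + s') / 2 * t| := by
      rw [abs_mul, abs_mul]
      refine mul_lt_mul_of_pos_right ?_ (abs_pos.mpr ht)
      rw [abs_of_pos (by positivity : 0 < (s + s') / 2), abs_lt]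
      constructor <;> linarith
    convert sq_sinhc_le_sinhc_add_mul_sinhc_sub hlt using 3 <;> ring

section eta

variable {d : ℕ} {I : Type*} [Fintype I] (α : I → (EuclideanSpace ℝ (Fin d) →ₗ[ℝ] ℝ))

lemma eta_smul (c : ℝ) (Y : EuclideanSpace ℝ (Fin d)) :
    eta α (c • Y) = ∏ i, sinhc (c * α i Y) := by
  simp only [eta, map_smul, smul_eq_mul]

lemma eta_zero : eta α 0 = 1 := by
  simp [eta, sinhc_zero]

lemma eta_pos (Y : EuclideanSpace ℝ (Fin d)) : 0 < eta α Y :=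
  Finset.prod_pos fun _ _ => sinhc_pos _

lemma continuous_eta : Continuous (eta α) :=
  continuous_finsetProd _ fun i _ => continuous_sinhc.comp (α i).continuous_of_finiteDimensional

lemma sq_eta_midpoint_le {s s' : ℝ} (hs : 0 < s) (hs' : 0 < s') (Y : EuclideanSpace ℝ (Fin d)) :
    eta α (((s + s') / 2) • Y) ^ 2 ≤ eta α (s • Y) * eta α (s' • Y) := by
  rw [eta_smul, eta_smul, eta_smul, ← Finset.prod_mul_distrib, ← Finset.prod_pow]
  exact Finset.prod_le_prod (fun _ _ => sq_nonneg _) fun _ _ => sq_sinhc_midpoint_le hs hs' _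

variable (n : ℕ) (s s' : ℝ)

lemma phi_zero : phi α n s s' 0 = ((s + s') / (2 * √(s * s'))) ^ n := by
  simp [phi, eta_zero]

lemma continuous_phi : Continuous (phi α n s s') := by
  have := continuous_eta α
  exact Continuous.div (by fun_prop) (by fun_prop) fun Y =>
    (mul_pos (eta_pos α _) (eta_pos α _)).ne'

variable {s s'}

lemma phi_nonneg (hss' : 0 ≤ s + s') (Y : EuclideanSpace ℝ (Fin d)) : 0 ≤ phi α n s s' Y := by
  unfold phi
  have := eta_pos α (s • Y)
  have := eta_pos α (s' • Y)
  positivity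

lemma phi_le (hs : 0 < s) (hs' : 0 < s') (Y : EuclideanSpace ℝ (Fin d)) :
    phi α n s s' Y ≤ ((s + s') / (2 * √(s * s'))) ^ n := by
  have hden : 0 < eta α (s • Y) * eta α (s' • Y) := mul_pos (eta_pos α _) (eta_pos α _)
  rw [phi, mul_div_assoc]
  exact mul_le_of_le_one_right (by positivity)
    ((div_le_one hden).mpr (sq_eta_midpoint_le α hs hs' Y))

end eta

lemma one_lt_add_div_two_mul_sqrt {s s' : ℝ} (hs : 0 < s) (hs' : 0 < s') (hne : s ≠ s') :
    1 < (s + s') / (2 * √(s * s')) := by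
  have hsqrt : √s ≠ √s' := fun h => hne <| by
    rw [← sq_sqrt hs.le, ← sq_sqrt hs'.le, h]
  rw [one_lt_div (by positivity), sqrt_mul hs.le]
  nlinarith [sq_sqrt hs.le, sq_sqrt hs'.le, sq_pos_of_ne_zero (sub_ne_zero.mpr hsqrt)]

section L2

variable {X : Type*} [MeasurableSpace X] {μ : Measure X} {φ : X → ℝ} {C : ℝ}

lemma memLp_sqrt_mul (hφ : AEStronglyMeasurable φ μ) (hφC : ∀ x, φ x ≤ C) {g : X → ℂ}
    (hg : MemLp g 2 μ) : MemLp (fun x => (√(φ x) : ℂ) * g x) 2 μ := by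
  refine (hg.const_mul (√C : ℂ)).of_le
    ((Complex.continuous_ofReal.comp continuous_sqrt).comp_aestronglyMeasurable hφ |>.mul hg.1) ?_
  filter_upwards with x
  simp only [norm_mul, Complex.norm_real, norm_eq_abs, abs_of_nonneg (sqrt_nonneg _)]
  exact mul_le_mul_of_nonneg_right (sqrt_le_sqrt (hφC x)) (norm_nonneg _)

lemma integral_mul_norm_sq_le (hφ : AEStronglyMeasurable φ μ) (hφ0 : ∀ x, 0 ≤ φ x)
    (hφC : ∀ x, φ x ≤ C) {g : X → ℂ} (hg : MemLp g 2 μ) :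
    ∫ x, φ x * ‖g x‖ ^ 2 ∂μ ≤ C * ∫ x, ‖g x‖ ^ 2 ∂μ := by
  have hg2 : Integrable (fun x => ‖g x‖ ^ 2) μ := hg.integrable_norm_pow two_ne_zero
  have hbound : ∀ x, φ x * ‖g x‖ ^ 2 ≤ C * ‖g x‖ ^ 2 := fun x =>
    mul_le_mul_of_nonneg_right (hφC x) (sq_nonneg _)
  have hφg : Integrable (fun x => φ x * ‖g x‖ ^ 2) μ := by
    refine (hg2.const_mul C).mono (hφ.mul hg2.1) (ae_of_all _ fun x => ?_)
    have h0 : 0 ≤ φ x * ‖g x‖ ^ 2 := mul_nonneg (hφ0 x) (sq_nonneg _)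
    rw [norm_of_nonneg h0, norm_of_nonneg (h0.trans (hbound x))]
    exact hbound x
  rw [← integral_const_mul]
  exact integral_mono hφg (hg2.const_mul C) hbound

end L2

lemma exists_memLp_integral_mul_norm_sq_ne {E : Type*} [NormedAddCommGroup E] [ProperSpace E]
    [MeasurableSpace E] [BorelSpace E] {μ : Measure E} [μ.IsOpenPosMeasure]
    [IsFiniteMeasureOnCompacts μ] {φ : E → ℝ} (hφ : Continuous φ) {x₀ : E} (hx₀ : 1 < φ x₀) :
    ∃ g : E → ℂ, MemLp g 2 μ ∧ 0 < ∫ x, ‖g x‖ ^ 2 ∂μ ∧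
      ∫ x, φ x * ‖g x‖ ^ 2 ∂μ ≠ ∫ x, ‖g x‖ ^ 2 ∂μ := by
  obtain ⟨c, hc1, hcx₀⟩ := exists_between hx₀
  set U := φ ⁻¹' Ioi c ∩ Metric.ball x₀ 1
  have hU : IsOpen U := (isOpen_Ioi.preimage hφ).inter Metric.isOpen_ball
  have hx₀U : x₀ ∈ U := ⟨hcx₀, Metric.mem_ball_self one_pos⟩
  have hUfin : μ U < ⊤ := (measure_mono inter_subset_right).trans_lt measure_ball_lt_top
  have hUpos : 0 < μ.real U := ENNReal.toReal_pos (hU.measure_pos μ ⟨x₀, hx₀U⟩).ne' hUfin.ne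
  have hφU : IntegrableOn φ U μ :=
    (hφ.continuousOn.integrableOn_compact (isCompact_closedBall x₀ 1)).mono_set
      (inter_subset_right.trans Metric.ball_subset_closedBall)
  have hsq : ∀ x, ‖U.indicator (fun _ => (1 : ℂ)) x‖ ^ 2 = U.indicator 1 x := fun x => by
    by_cases hx : x ∈ U <;> simp [hx]
  have hnorm : ∫ x, ‖U.indicator (fun _ => (1 : ℂ)) x‖ ^ 2 ∂μ = μ.real U := by
    simp_rw [hsq]
    rw [integral_indicator_one hU.measurableSet]
  have hweighted : ∫ x, φ x * ‖U.indicator (fun _ => (1 : ℂ)) x‖ ^ 2 ∂μ = ∫ x in U, φ x ∂μ := by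
    simp_rw [hsq, ← indicator_mul_right, Pi.one_apply, mul_one]
    exact integral_indicator hU.measurableSet
  refine ⟨U.indicator fun _ => 1, memLp_indicator_const 2 hU.measurableSet 1 (Or.inr hUfin.ne),
    hnorm ▸ hUpos, ?_⟩
  rw [hnorm, hweighted]
  refine ne_of_gt (lt_of_lt_of_le ?_ (setIntegral_ge_of_const_le hU.measurableSet hUfin.ne
    (fun x hx => hx.1.le) hφU))
  simpa using lt_mul_of_one_lt_right hUpos hc1

theorem statement_2_general {d : ℕ} {I : Type*} [Fintype I]
    (α : I → (EuclideanSpace ℝ (Fin d) →ₗ[ℝ] ℝ)) {n : ℕ} (hn : 1 ≤ n)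
    {s s' : ℝ} (hs : 0 < s) (hs' : 0 < s') (hne : s ≠ s') :
    (∀ g : EuclideanSpace ℝ (Fin d) → ℂ, MemLp g 2 volume →
      MemLp (fun Y => (Real.sqrt (phi α n s s' Y) : ℂ) * g Y) 2 volume ∧
      (∫ Y, phi α n s s' Y * ‖g Y‖ ^ 2) ≤
        ((s + s') / (2 * Real.sqrt (s * s'))) ^ n * ∫ Y, ‖g Y‖ ^ 2) ∧
    ∃ g : EuclideanSpace ℝ (Fin d) → ℂ, MemLp g 2 volume ∧
      0 < (∫ Y, ‖g Y‖ ^ 2) ∧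
      (∫ Y, phi α n s s' Y * ‖g Y‖ ^ 2) ≠ ∫ Y, ‖g Y‖ ^ 2 := by
  have hcont := continuous_phi α n s s'
  have hnonneg := phi_nonneg α n (by linarith : 0 ≤ s + s')
  have hle := phi_le α n hs hs'
  refine ⟨fun g hg => ⟨memLp_sqrt_mul hcont.aestronglyMeasurable hle hg,
    integral_mul_norm_sq_le hcont.aestronglyMeasurable hnonneg hle hg⟩, ?_⟩
  refine exists_memLp_integral_mul_norm_sq_ne hcont (x₀ := 0) ?_
  rw [phi_zero]
  exact one_lt_pow₀ (one_lt_add_div_two_mul_sqrt hs hs' hne) (by omega)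

/-- Theorem 2.4: in the unitary trivializations, the prequantum BKS pairing map
`B^{prQ}_{ss'}` is multiplication by `√φ`, hence bounded but not an isometry.
(a) multiplication by `√φ` maps `L²` into `L²` with the stated norm bound;
(b) it is not an isometry. -/
theorem statement_2 {d : ℕ} (hd : 1 ≤ d) {I : Type*} [Fintype I]
    (α : I → (EuclideanSpace ℝ (Fin d) →ₗ[ℝ] ℝ)) {n : ℕ} (hn : 1 ≤ n)
    {s s' : ℝ} (hs : 0 < s) (hs' : 0 < s') (hne : s ≠ s') :
    (∀ g : EuclideanSpace ℝ (Fin d) → ℂ, MemLp g 2 volume →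
      MemLp (fun Y => (Real.sqrt (phi α n s s' Y) : ℂ) * g Y) 2 volume ∧
      (∫ Y, phi α n s s' Y * ‖g Y‖ ^ 2) ≤
        ((s + s') / (2 * Real.sqrt (s * s'))) ^ n * ∫ Y, ‖g Y‖ ^ 2) ∧
    ∃ g : EuclideanSpace ℝ (Fin d) → ℂ, MemLp g 2 volume ∧
      0 < (∫ Y, ‖g Y‖ ^ 2) ∧
      (∫ Y, phi α n s s' Y * ‖g Y‖ ^ 2) ≠ ∫ Y, ‖g Y‖ ^ 2 :=
  statement_2_general α hn hs hs' hne
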